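/- For each j ∈ I₁ = {m+1,…,m+n}, the q-derivative ∂_j on Ω_q(m|n) is a (Θ(−ε_j)τ_j, 1)-derivation: ∂_j(a·b) = ∂_j(a)·b + (Θ(−ε_j)τ_j)(a)·∂_j(b) for all a, b ∈ Ω_q(m|n). -/

import Mathlib

/-- Balanced quantum binomial coefficient `[n choose r]_q` via the Pascal recurrence. -/
noncomputable def qbin {k : Type*} [Field k] (q : k) : ℕ → ℕ → k
  | _, 0 => 1
  | 0, _ + 1 => 0
  | n + 1, r + 1 =>
      q ^ ((r : ℤ) + 1 - ((n : ℤ) + 1)) * qbin q n r + q ^ ((r : ℤ) + 1) * qbin q n (r + 1)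

/-- The `∗`-product on `ℤ₊^m`. -/
def starN {m : ℕ} (β γ : Fin m → ℕ) : ℕ :=
  ∑ p ∈ Finset.univ.filter (fun p : Fin m × Fin m => p.2 < p.1), β p.1 * γ p.2

/-- Index set of the monomial basis of `Ω_q(m|n)`. -/
abbrev OmegaIdx (m n : ℕ) := (Fin m → ℕ) × (Fin n → ℕ)

/-- Underlying vector space of `Ω_q(m|n)`. -/
abbrev Omega (k : Type*) [Field k] (m n : ℕ) := OmegaIdx m n →₀ k

/-- Multiplication of the quantum Grassmann superalgebra `Ω_q(m|n)`. -/
noncomputable def Omul {k : Type*} [Field k] (q : k) {m n : ℕ}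
    (f g : Omega k m n) : Omega k m n :=
  f.sum fun p a => g.sum fun r b =>
    Finsupp.single (p.1 + r.1, p.2 + r.2)
      (a * b * (if ∀ j, p.2 j + r.2 j ≤ 1 then 1 else 0) *
        q ^ ((∑ j, p.2 j) * (∑ i, r.1 i) + starN p.1 r.1) *
        (∏ i, qbin q (p.1 i + r.1 i) (p.1 i)) * (-q) ^ starN p.2 r.2)

/-- Diagonal operator on `Ω_q(m|n)` multiplying the basis vector indexed by `p`
by the scalar `c p`. -/
noncomputable def diagOp {k : Type*} [Field k] (m n : ℕ) (c : OmegaIdx m n → k) :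
    Omega k m n →ₗ[k] Omega k m n :=
  Finsupp.lsum k fun p =>
    LinearMap.toSpanSingleton k (Omega k m n) (c p • Finsupp.single p 1)

/-- The twist `Θ(−ε_j)τ_j` (`j ∈ I₁`): the basis vector `x^(β)⊗x^μ` is multiplied
by `(−q)^{μ∗ε_j − ε_j∗μ} q^{−|β|} (−1)^{μ_j}`. -/
noncomputable def ThetaTau {k : Type*} [Field k] (q : k) (m n : ℕ) (j : Fin n) :
    Omega k m n →ₗ[k] Omega k m n :=
  diagOp m n fun p =>
    (-q) ^ ((∑ t ∈ Finset.univ.filter (fun t : Fin n => j < t), (p.2 t : ℤ)) -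
        (∑ t ∈ Finset.univ.filter (fun t : Fin n => t < j), (p.2 t : ℤ))) *
      q ^ (-(∑ s, (p.1 s : ℤ))) * (-1 : k) ^ (p.2 j)

/-- The `q`-derivative `∂_j` for `j ∈ I₁`:
`∂_j(x^(β)⊗x^μ) = q^{−ε_j∗β}(−q)^{−ε_j∗μ} δ_{μ_j,1} x^(β)⊗x^{μ−ε_j}`. -/
noncomputable def Dn {k : Type*} [Field k] (q : k) (m n : ℕ) (j : Fin n) :
    Omega k m n →ₗ[k] Omega k m n :=
  Finsupp.lsum k fun p => LinearMap.toSpanSingleton k (Omega k m n)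
    (if p.2 j = 1 then
      (q ^ (-(∑ s, (p.1 s : ℤ))) *
          (-q) ^ (-(∑ t ∈ Finset.univ.filter (fun t : Fin n => t < j), (p.2 t : ℤ)))) •
        Finsupp.single (p.1, p.2 - Pi.single j 1) 1
     else 0)

/-!
Both sides are bilinear in `(a, b)`, so it suffices to compare them on two basis monomials
`x^(β)⊗x^μ` and `x^(γ)⊗x^ν`, and only the exponents `μ_j`, `ν_j` matter. If one of them is `1`
and the other `0`, both sides are multiples of the same monomial, and the scalars agree because
`|μ| = |μ - ε_j| + 1` and `μ ∗ ν = (μ - ε_j) ∗ ν + ε_j ∗ ν = μ ∗ (ν - ε_j) + μ ∗ ε_j`.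
If both are `1`, the left side vanishes (`x_j² = 0`) and the two terms on the right cancel,
because `τ_j` contributes the sign `(-1)^{μ_j} = -1`. In every other case each term contains
a product with `j`-exponent at least `2` or a monomial killed by `∂_j`.
-/

open Finset

section StarProduct

variable {n : ℕ} (j : Fin n) (μ ν : Fin n → ℕ)

theorem starN_add_left (μ₁ μ₂ : Fin n → ℕ) : starN (μ₁ + μ₂) ν = starN μ₁ ν + starN μ₂ ν := by
  simp only [starN, Pi.add_apply, add_mul, sum_add_distrib]

theorem starN_add_right (ν₁ ν₂ : Fin n → ℕ) : starN μ (ν₁ + ν₂) = starN μ ν₁ + starN μ ν₂ := by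
  simp only [starN, Pi.add_apply, mul_add, sum_add_distrib]

theorem starN_single_left : starN (Pi.single j 1) ν = ∑ t ∈ univ.filter (· < j), ν t := by
  rw [starN, sum_filter, Fintype.sum_prod_type, sum_eq_single j]
  · simp [sum_filter]
  · intro s _ hs; simp [hs]
  · simp

theorem starN_single_right : starN μ (Pi.single j 1) = ∑ t ∈ univ.filter (j < ·), μ t := by
  rw [starN, sum_filter, Fintype.sum_prod_type_right, sum_eq_single j]
  · simp [sum_filter]
  · intro s _ hs; simp [hs]
  · simp

end StarProduct

theorem Pi.single_one_le_of_one_le {n : ℕ} {μ : Fin n → ℕ} {j : Fin n} (h : 1 ≤ μ j) :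
    Pi.single j 1 ≤ μ := by
  intro t
  rcases eq_or_ne t j with rfl | ht
  · simpa using h
  · simp [ht]

section Lowering

variable {n : ℕ} {j : Fin n} {μ ν : Fin n → ℕ}

theorem sum_sub_single_add_one (h : 1 ≤ μ j) :
    ∑ t, (μ - Pi.single j 1 : Fin n → ℕ) t + 1 = ∑ t, μ t := by
  conv_rhs => rw [← tsub_add_cancel_of_le (Pi.single_one_le_of_one_le h)]
  simp [sum_add_distrib]

theorem starN_sub_single_left (h : 1 ≤ μ j) :
    starN μ ν = starN (μ - Pi.single j 1) ν + ∑ t ∈ univ.filter (· < j), ν t := by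
  conv_lhs => rw [← tsub_add_cancel_of_le (Pi.single_one_le_of_one_le h)]
  rw [starN_add_left, starN_single_left]

theorem starN_sub_single_right (h : 1 ≤ ν j) :
    starN μ ν = starN μ (ν - Pi.single j 1) + ∑ t ∈ univ.filter (j < ·), μ t := by
  conv_lhs => rw [← tsub_add_cancel_of_le (Pi.single_one_le_of_one_le h)]
  rw [starN_add_right, starN_single_right]

theorem sum_filter_lt_sub_single :
    ∑ t ∈ univ.filter (· < j), (μ - Pi.single j 1 : Fin n → ℕ) t =
      ∑ t ∈ univ.filter (· < j), μ t :=
  sum_congr rfl fun t ht => by simp [(mem_filter.1 ht).2.ne]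

theorem sum_filter_gt_sub_single :
    ∑ t ∈ univ.filter (j < ·), (μ - Pi.single j 1 : Fin n → ℕ) t =
      ∑ t ∈ univ.filter (j < ·), μ t :=
  sum_congr rfl fun t ht => by simp [(mem_filter.1 ht).2.ne']

end Lowering

namespace OmegaIdx

variable {m n : ℕ} {j : Fin n} {p r : OmegaIdx m n}

def lower (j : Fin n) (p : OmegaIdx m n) : OmegaIdx m n := (p.1, p.2 - Pi.single j 1)

theorem lower_snd_self : (p.lower j).2 j = p.2 j - 1 := by
  simp [lower]

theorem lower_add (hp : 1 ≤ p.2 j) : p.lower j + r = (p + r).lower j :=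
  Prod.ext rfl (tsub_add_eq_add_tsub (c := r.2) (Pi.single_one_le_of_one_le hp))

theorem add_lower (hr : 1 ≤ r.2 j) : p + r.lower j = (p + r).lower j :=
  Prod.ext rfl (add_tsub_assoc_of_le (Pi.single_one_le_of_one_le hr) p.2).symm

end OmegaIdx

section Coefficients

variable {k : Type*} [Field k] (q : k) {m n : ℕ}

noncomputable def omulCoeff (p r : OmegaIdx m n) : k :=
  (if ∀ j, p.2 j + r.2 j ≤ 1 then 1 else 0) *
    q ^ ((∑ j, p.2 j) * (∑ i, r.1 i) + starN p.1 r.1) *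
    (∏ i, qbin q (p.1 i + r.1 i) (p.1 i)) * (-q) ^ starN p.2 r.2

noncomputable def dnCoeff (j : Fin n) (p : OmegaIdx m n) : k :=
  q ^ (-(∑ s, (p.1 s : ℤ))) *
    (-q) ^ (-(∑ t ∈ univ.filter (fun t : Fin n => t < j), (p.2 t : ℤ)))

noncomputable def thetaTauCoeff (j : Fin n) (p : OmegaIdx m n) : k :=
  (-q) ^ ((∑ t ∈ univ.filter (fun t : Fin n => j < t), (p.2 t : ℤ)) -
      (∑ t ∈ univ.filter (fun t : Fin n => t < j), (p.2 t : ℤ))) *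
    q ^ (-(∑ s, (p.1 s : ℤ))) * (-1 : k) ^ (p.2 j)

end Coefficients

section Basis

variable {k : Type*} [Field k] (q : k) {m n : ℕ}

theorem Omul_single_single (p r : OmegaIdx m n) (a b : k) :
    Omul q (Finsupp.single p a) (Finsupp.single r b) =
      Finsupp.single (p + r) (a * b * omulCoeff q p r) := by
  simp only [Omul, omulCoeff, mul_assoc, zero_mul, mul_zero, Finsupp.single_zero,
    Finsupp.sum_single_index]
  rfl

theorem Dn_single (j : Fin n) (p : OmegaIdx m n) (c : k) :
    Dn q m n j (Finsupp.single p c) =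
      if p.2 j = 1 then Finsupp.single (p.lower j) (c * dnCoeff q j p) else 0 := by
  simp only [Dn, Finsupp.lsum_single, LinearMap.toSpanSingleton_apply, smul_ite,
    smul_zero, Finsupp.smul_single, smul_eq_mul, mul_one, dnCoeff, OmegaIdx.lower]

theorem ThetaTau_single (j : Fin n) (p : OmegaIdx m n) (c : k) :
    ThetaTau q m n j (Finsupp.single p c) = Finsupp.single p (c * thetaTauCoeff q j p) := by
  simp only [ThetaTau, diagOp, Finsupp.lsum_single, LinearMap.toSpanSingleton_apply,
    Finsupp.smul_single, smul_eq_mul, mul_one, thetaTauCoeff]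

noncomputable def Omulₗ : Omega k m n →ₗ[k] Omega k m n →ₗ[k] Omega k m n :=
  Finsupp.lsum k fun p => LinearMap.toSpanSingleton k _ <|
    Finsupp.lsum k fun r =>
      LinearMap.toSpanSingleton k _ (Finsupp.single (p + r) (omulCoeff q p r))

theorem Omulₗ_apply (f g : Omega k m n) : Omulₗ q f g = Omul q f g := by
  have hsum : Omul q f g = f.sum fun p a => g.sum fun r b =>
      Finsupp.single (p + r) (a * b * omulCoeff q p r) := by
    simp only [Omul, omulCoeff, mul_assoc]
    rfl
  simp only [hsum, Omulₗ, Finsupp.lsum_apply, LinearMap.finsupp_sum_apply, LinearMap.smul_apply,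
    LinearMap.toSpanSingleton_apply, Finsupp.smul_sum, Finsupp.smul_single, smul_eq_mul, mul_assoc]

theorem Omul_zero_left (g : Omega k m n) : Omul q 0 g = 0 := by
  rw [← Omulₗ_apply, map_zero, LinearMap.zero_apply]

theorem Omul_zero_right (f : Omega k m n) : Omul q f 0 = 0 := by
  rw [← Omulₗ_apply, map_zero]

end Basis

section Derivation

variable {k : Type*} [Field k] {q : k} {m n : ℕ} {j : Fin n} {p r : OmegaIdx m n}

theorem omulCoeff_eq_zero (h : 2 ≤ p.2 j + r.2 j) : omulCoeff q p r = 0 := by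
  rw [omulCoeff, if_neg fun hc => by have := hc j; omega]
  ring

variable (hq : q ≠ 0)
include hq

theorem omulCoeff_mul_dnCoeff_of_left (hp : p.2 j = 1) (hr : r.2 j = 0) :
    omulCoeff q p r * dnCoeff q j (p + r) = dnCoeff q j p * omulCoeff q (p.lower j) r := by
  obtain ⟨β, μ⟩ := p; obtain ⟨γ, ν⟩ := r
  dsimp only [OmegaIdx.lower] at hp hr ⊢
  have hadm : (∀ t, (μ - Pi.single j 1 : Fin n → ℕ) t + ν t ≤ 1) ↔ ∀ t, μ t + ν t ≤ 1 :=
    forall_congr' fun t => by rcases eq_or_ne t j with rfl | ht <;> simp [*]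
  have hdeg := sum_sub_single_add_one hp.ge
  simp only [omulCoeff, dnCoeff, hadm, Prod.fst_add, Prod.snd_add, Pi.add_apply,
    Nat.cast_add, sum_add_distrib, starN_sub_single_left hp.ge, ← hdeg]
  have hq' : -q ≠ 0 := neg_ne_zero.2 hq
  simp only [← Nat.cast_sum, neg_add, zpow_add₀ hq, zpow_add₀ hq', zpow_neg, zpow_natCast,
    add_mul, one_mul, pow_add]
  field_simp

theorem omulCoeff_mul_dnCoeff_of_right (hp : p.2 j = 0) (hr : r.2 j = 1) :
    omulCoeff q p r * dnCoeff q j (p + r) =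
      thetaTauCoeff q j p * dnCoeff q j r * omulCoeff q p (r.lower j) := by
  obtain ⟨β, μ⟩ := p; obtain ⟨γ, ν⟩ := r
  dsimp only [OmegaIdx.lower] at hp hr ⊢
  have hadm : (∀ t, μ t + (ν - Pi.single j 1 : Fin n → ℕ) t ≤ 1) ↔ ∀ t, μ t + ν t ≤ 1 :=
    forall_congr' fun t => by rcases eq_or_ne t j with rfl | ht <;> simp [*]
  simp only [omulCoeff, dnCoeff, thetaTauCoeff, hadm, hp, Prod.fst_add,
    Prod.snd_add, Pi.add_apply, Nat.cast_add, sum_add_distrib, starN_sub_single_right hr.ge]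
  have hq' : -q ≠ 0 := neg_ne_zero.2 hq
  simp only [← Nat.cast_sum, neg_add, zpow_add₀ hq, zpow_add₀ hq', zpow_sub₀ hq', zpow_neg,
    zpow_natCast, pow_add, pow_zero]
  field_simp

theorem dnCoeff_mul_omulCoeff_add_eq_zero (hp : p.2 j = 1) (hr : r.2 j = 1) :
    dnCoeff q j p * omulCoeff q (p.lower j) r +
      thetaTauCoeff q j p * dnCoeff q j r * omulCoeff q p (r.lower j) = 0 := by
  obtain ⟨β, μ⟩ := p; obtain ⟨γ, ν⟩ := r
  dsimp only [OmegaIdx.lower] at hp hr ⊢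
  have hadm : (∀ t, (μ - Pi.single j 1 : Fin n → ℕ) t + ν t ≤ 1) ↔
      ∀ t, μ t + (ν - Pi.single j 1 : Fin n → ℕ) t ≤ 1 :=
    forall_congr' fun t => by rcases eq_or_ne t j with rfl | ht <;> simp [*]
  have hdeg := sum_sub_single_add_one hp.ge
  simp only [omulCoeff, dnCoeff, thetaTauCoeff, hadm, hp, ← hdeg,
    starN_sub_single_left hp.ge, starN_sub_single_right hr.ge, sum_filter_lt_sub_single,
    sum_filter_gt_sub_single]
  have hq' : -q ≠ 0 := neg_ne_zero.2 hq
  simp only [← Nat.cast_sum, zpow_sub₀ hq', zpow_neg, zpow_natCast, add_mul, one_mul, pow_add,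
    pow_one]
  field_simp
  ring

theorem Dn_Omul_single_single :
    Dn q m n j (Omul q (Finsupp.single p 1) (Finsupp.single r 1)) =
      Omul q (Dn q m n j (Finsupp.single p 1)) (Finsupp.single r 1) +
        Omul q (ThetaTau q m n j (Finsupp.single p 1)) (Dn q m n j (Finsupp.single r 1)) := by
  have hpr : (p + r).2 j = p.2 j + r.2 j := rfl
  simp only [Omul_single_single, Dn_single, ThetaTau_single, hpr, one_mul]
  by_cases hp : p.2 j = 1 <;> by_cases hr : r.2 j = 1
  · rw [if_neg (by omega), if_pos hp, if_pos hr, Omul_single_single, Omul_single_single,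
      OmegaIdx.lower_add hp.ge, OmegaIdx.add_lower hr.ge, ← Finsupp.single_add, mul_one,
      dnCoeff_mul_omulCoeff_add_eq_zero hq hp hr, Finsupp.single_zero]
  · rw [if_pos hp, if_neg hr, Omul_single_single, Omul_zero_right, add_zero,
      OmegaIdx.lower_add hp.ge, mul_one]
    rcases Nat.lt_or_ge (r.2 j) 1 with hr0 | hr2
    · rw [if_pos (by omega), omulCoeff_mul_dnCoeff_of_left hq hp (by omega)]
    · rw [if_neg (by omega), omulCoeff_eq_zero (j := j) (by rw [OmegaIdx.lower_snd_self]; omega),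
        mul_zero, Finsupp.single_zero]
  · rw [if_neg hp, if_pos hr, Omul_zero_left, zero_add, Omul_single_single,
      OmegaIdx.add_lower hr.ge]
    rcases Nat.lt_or_ge (p.2 j) 1 with hp0 | hp2
    · rw [if_pos (by omega), omulCoeff_mul_dnCoeff_of_right hq (by omega) hr]
    · rw [if_neg (by omega), omulCoeff_eq_zero (j := j) (by rw [OmegaIdx.lower_snd_self]; omega),
        mul_zero, Finsupp.single_zero]
  · rw [if_neg hp, if_neg hr, if_neg (by omega), Omul_zero_left, Omul_zero_right, add_zero]

end Derivation

/-- For `j ∈ I₁`, the `q`-derivative `∂_j` is a `(Θ(−ε_j)τ_j, 1)`-derivation of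
`Ω_q(m|n)`: `∂_j(a·b) = ∂_j(a)·b + (Θ(−ε_j)τ_j)(a)·∂_j(b)`. -/
theorem Dn_twisted_derivation {k : Type*} [Field k] (q : k) (hq : q ≠ 0) (m n : ℕ)
    (j : Fin n) (a b : Omega k m n) :
    Dn q m n j (Omul q a b) =
      Omul q (Dn q m n j a) b + Omul q (ThetaTau q m n j a) (Dn q m n j b) := by
  have h : (Omulₗ q).compr₂ (Dn q m n j) =
      Omulₗ q ∘ₗ Dn q m n j + (Omulₗ q).compl₂ (Dn q m n j) ∘ₗ ThetaTau q m n j := by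
    ext p r : 4
    simpa [Omulₗ_apply] using Dn_Omul_single_single hq
  simpa [Omulₗ_apply] using LinearMap.congr_fun₂ h a b
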